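/- Let L be a thin Lie algebra over a field F of odd prime characteristic p, with second diamond L_k where k = 2q − 1 for some power q of p with q > 1, with setup elements x, y satisfying [y x^i y] = 0 for 0 ≤ i < k−2 and v := [y x^{k−2}], and assume L/L^k is metabelian. Let h be the smallest integer with h > 1 and [v y x^{h−1} y] ≠ 0. Then h = q − 1. -/

import Mathlib

/-!
Write `N = k - 2 = 2q - 3`, `u n = [y x^n]`, `v = u N`, `w = [v y]` and `t = h - 1`.
Thinness makes `L_{N+2+s}` the span of `[w x^s]` for `1 ≤ s ≤ t`, so `[v x^s y] = 0` for
`2 ≤ s ≤ t`, while expanding `⁅[y x], v⁆` and using `N + 1 ≡ -2 (mod p)` gives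
`[v x y] = -[w x]`.
Expanding `⁅u (N - r), u (t + r)⁆` by the Leibniz rule, only two terms survive and it equals
`(-1)^r C(t+r+1, r+1) [w x^t]`. Bracketing with `y` and cancelling `[w x^t y] ≠ 0` gives, in `F`,
`t + 1 = (-1)^t`, `C(2q-2, t) = 1` and `C(t+r+1, r+1) = 0` for `1 ≤ r < N - t`
(and `t ≥ N` is impossible, since `⁅v, v⁆ = 0` would force `(2q - 2) [w x^N] = 0`).
Since `C(q + a, c) ≡ C(a, c)` for `c < q` and `C(q - 2, c) ≡ (-1)^c (c + 1)`, these congruences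
leave only `t = q - 2`.
-/

/-- Left-normed bracket of `a` with `n` copies of `b`:
`lnb a b n = [a b … b]` with `n` occurrences of `b`. -/
def lnb {L : Type*} [LieRing L] (a b : L) : ℕ → L
  | 0 => a
  | n + 1 => ⁅lnb a b n, b⁆

/-- `Lc` is a grading of `L` (indexed by `ℕ`, with trivial component in degree `0`)
making `L` an (infinite-dimensional) thin Lie algebra: `L` is the internal direct sum
of the `Lc i`, `⁅Lc i, Lc j⁆ ⊆ Lc (i+j)`, `dim (Lc 1) = 2`, every `Lc i` (`i ≥ 1`) is
nonzero, and the covering property holds: for every `i ≥ 1` and nonzero `z ∈ Lc i`,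
`span {⁅z, w⁆ : w ∈ Lc 1} = Lc (i+1)`. -/
structure IsThinGrading (F : Type*) [Field F] (L : Type*) [LieRing L] [LieAlgebra F L]
    (Lc : ℕ → Submodule F L) : Prop where
  zero : Lc 0 = ⊥
  internal : DirectSum.IsInternal Lc
  bracket_mem : ∀ i j : ℕ, ∀ u ∈ Lc i, ∀ w ∈ Lc j, ⁅u, w⁆ ∈ Lc (i + j)
  dim_one : Module.finrank F (Lc 1) = 2
  nonzero : ∀ i : ℕ, 1 ≤ i → Lc i ≠ ⊥
  covering : ∀ i : ℕ, 1 ≤ i → ∀ z ∈ Lc i, z ≠ 0 →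
    Submodule.span F {w | ∃ u ∈ Lc 1, w = ⁅z, u⁆} = Lc (i + 1)

/-- `k` is the degree of the second diamond: the smallest `k > 1` with
`dim (Lc k) = 2`. -/
def IsSecondDiamond {F : Type*} [Field F] {L : Type*} [LieRing L] [LieAlgebra F L]
    (Lc : ℕ → Submodule F L) (k : ℕ) : Prop :=
  IsLeast {i : ℕ | 1 < i ∧ Module.finrank F (Lc i) = 2} k

/-- The quotient `L/L^k` is metabelian: `⁅Lc i, Lc j⁆ = 0` whenever `i, j ≥ 2` and
`i + j < k`. -/
def QuotientMetabelian {F : Type*} [Field F] {L : Type*} [LieRing L] [LieAlgebra F L]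
    (Lc : ℕ → Submodule F L) (k : ℕ) : Prop :=
  ∀ i j : ℕ, 2 ≤ i → 2 ≤ j → i + j < k → ∀ u ∈ Lc i, ∀ w ∈ Lc j, ⁅u, w⁆ = 0

/-- The standard setup in a thin Lie algebra with second diamond `L_k`, `k > 3`:
`y ∈ L_1` is nonzero and centralizes `L_2`, `x, y` form a basis of `L_1` (equivalently,
they are linearly independent elements of the two-dimensional space `L_1`), and
`[y x^i y] = 0` for `0 ≤ i < k − 2`. -/
structure ThinSetup {F : Type*} [Field F] {L : Type*} [LieRing L] [LieAlgebra F L]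
    (Lc : ℕ → Submodule F L) (x y : L) (k : ℕ) : Prop where
  k_gt : 3 < k
  y_mem : y ∈ Lc 1
  x_mem : x ∈ Lc 1
  indep : LinearIndependent F ![x, y]
  y_central : ∀ u ∈ Lc 2, ⁅u, y⁆ = 0
  chain : ∀ i : ℕ, i < k - 2 → ⁅lnb y x i, y⁆ = 0

open Finset

section Lnb

variable {L : Type*} [LieRing L]

@[simp]
lemma lnb_zero (a b : L) : lnb a b 0 = a := rfl

lemma lnb_succ (a b : L) (n : ℕ) : lnb a b (n + 1) = ⁅lnb a b n, b⁆ := rfl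

lemma lnb_zero_left (b : L) (n : ℕ) : lnb 0 b n = 0 := by
  induction n with
  | zero => rfl
  | succ n ih => rw [lnb_succ, ih, zero_lie]

lemma lnb_neg (a b : L) (n : ℕ) : lnb (-a) b n = -lnb a b n := by
  induction n with
  | zero => rfl
  | succ n ih => rw [lnb_succ, lnb_succ, ih, neg_lie]

lemma lnb_lnb (a b : L) (m n : ℕ) : lnb (lnb a b m) b n = lnb a b (m + n) := by
  induction n with
  | zero => rfl
  | succ n ih => rw [lnb_succ, ih, ← add_assoc, lnb_succ]

lemma lnb_succ' (a b : L) (n : ℕ) : lnb a b (n + 1) = lnb ⁅a, b⁆ b n := by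
  rw [add_comm, ← lnb_lnb]; rfl

/-- Since `⁅·, c⁆` is a derivation, `⁅a, ⁅b, c⁆⁆ = ⁅⁅a, b⁆, c⁆ - ⁅⁅a, c⁆, b⁆`; iterate. -/
lemma lie_lnb (a b c : L) (n : ℕ) :
    ⁅a, lnb b c n⁆ = ∑ ij ∈ antidiagonal n,
      n.choose ij.1 • (-1 : ℤ) ^ ij.1 • lnb ⁅lnb a c ij.1, b⁆ c ij.2 := by
  induction n generalizing a with
  | zero => simp
  | succ n ih =>
    have hstep : ⁅a, lnb b c (n + 1)⁆ = ⁅⁅a, lnb b c n⁆, c⁆ - ⁅⁅a, c⁆, lnb b c n⁆ := by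
      rw [lnb_succ, leibniz_lie, ← lie_skew ⁅a, c⁆]; abel
    rw [hstep, sum_antidiagonal_choose_succ_nsmul
      (fun i j ↦ (-1 : ℤ) ^ i • lnb ⁅lnb a c i, b⁆ c j), ih, ih, sum_lie, sub_eq_add_neg,
      ← sum_neg_distrib]
    congr 1
    · refine sum_congr rfl fun ij _ ↦ ?_
      rw [nsmul_lie, zsmul_lie, lnb_succ]
    · refine sum_congr rfl fun ij hij ↦ ?_
      rw [Nat.choose_symm_of_eq_add (mem_antidiagonal.1 hij).symm, ← lnb_succ', pow_succ,
        mul_neg_one, neg_smul, smul_neg]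

end Lnb

section Chain

variable {L : Type*} [LieRing L] {x y : L} {N t : ℕ}

lemma lie_lnb_eq_neg_one_pow_zsmul {w : L} (hT : ∀ i < t, ⁅lnb w x i, y⁆ = 0) :
    ⁅w, lnb y x t⁆ = (-1 : ℤ) ^ t • ⁅lnb w x t, y⁆ := by
  rw [lie_lnb, sum_eq_single (t, 0)]
  · simp
  · rintro ⟨i, j⟩ hij hne
    have hi : i < t := by
      rw [HasAntidiagonal.mem_antidiagonal] at hij
      by_contra! hti
      exact hne (Prod.ext (by omega) (by simp only; omega))
    rw [hT i hi, lnb_zero_left, smul_zero, smul_zero]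
  · exact fun h ↦ absurd (HasAntidiagonal.mem_antidiagonal.2 (by simp)) h

lemma lie_lie_lnb_eq_zero (hchain : ∀ n < N, ⁅lnb y x n, y⁆ = 0) (hN : 2 ≤ N) :
    ⁅⁅lnb y x N, y⁆, y⁆ = 0 := by
  obtain ⟨M, rfl⟩ := Nat.exists_eq_add_of_le' hN
  have hxyy : ⁅⁅x, y⁆, y⁆ = 0 := by
    rw [← lie_skew x y, neg_lie]
    exact neg_eq_zero.2 (hchain 1 (by omega))
  have hw : ⁅lnb y x (M + 2), y⁆ = ⁅lnb y x (M + 1), ⁅x, y⁆⁆ := by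
    rw [lnb_succ _ _ (M + 1), lie_lie, hchain (M + 1) (by omega), lie_zero, sub_zero]
  rw [hw, lie_lie, hxyy, lie_zero, hchain (M + 1) (by omega), lie_zero, sub_zero]

lemma two_nsmul_lie_lnb_one (hchain : ∀ n < N, ⁅lnb y x n, y⁆ = 0) (hN : Odd N) :
    2 • ⁅lnb (lnb y x N) x 1, y⁆ = (N + 1) • lnb ⁅lnb y x N, y⁆ x 1 := by
  have hN1 : 1 ≤ N := hN.pos
  have hexp := lie_lnb (lnb y x 1) y x N
  rw [sum_eq_add (N - 1, 1) (N, 0)] at hexp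
  · dsimp only at hexp
    have hskew : ⁅lnb y x 1, lnb y x N⁆ =
        ⁅lnb (lnb y x N) x 1, y⁆ - lnb ⁅lnb y x N, y⁆ x 1 := by
      rw [← lie_skew]
      show -⁅lnb y x N, ⁅y, x⁆⁆ = ⁅⁅lnb y x N, x⁆, y⁆ - ⁅⁅lnb y x N, y⁆, x⁆
      rw [leibniz_lie, ← lie_skew ⁅lnb y x N, x⁆ y]
      abel
    rw [lnb_lnb, lnb_lnb, Nat.add_sub_cancel' hN1, hskew, add_comm 1 N, ← lnb_lnb y x N 1,
      lnb_zero, Nat.choose_symm hN1, Nat.choose_one_right, Nat.choose_self,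
      (Nat.Odd.sub_odd hN odd_one).neg_one_pow, hN.neg_one_pow] at hexp
    linear_combination (norm := module) hexp
  · simp only [ne_eq, Prod.mk.injEq]; omega
  · rintro ⟨i, j⟩ hij hne
    rw [HasAntidiagonal.mem_antidiagonal] at hij
    rw [lnb_lnb, hchain (1 + i) (by simp only [ne_eq, Prod.mk.injEq] at hne; omega), lnb_zero_left, smul_zero, smul_zero]
  · exact fun h ↦ absurd (HasAntidiagonal.mem_antidiagonal.2 (by omega)) h
  · exact fun h ↦ absurd (HasAntidiagonal.mem_antidiagonal.2 (by omega)) h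

lemma lie_lnb_sub_lnb_add (hchain : ∀ n < N, ⁅lnb y x n, y⁆ = 0)
    (hA1 : ⁅lnb (lnb y x N) x 1, y⁆ = -lnb ⁅lnb y x N, y⁆ x 1)
    (hA : ∀ s, 2 ≤ s → s ≤ t → ⁅lnb (lnb y x N) x s, y⁆ = 0) (ht : 1 ≤ t) {r : ℕ} (hr : r ≤ N) :
    ⁅lnb y x (N - r), lnb y x (t + r)⁆ =
      ((-1 : ℤ) ^ r * (t + r + 1).choose (r + 1)) • lnb ⁅lnb y x N, y⁆ x t := by
  rw [lie_lnb, sum_eq_add (r, t) (r + 1, t - 1)]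
  · dsimp only
    rw [lnb_lnb, lnb_lnb, Nat.sub_add_cancel hr, ← add_assoc, Nat.sub_add_cancel hr,
      ← lnb_lnb y x N 1, hA1, lnb_neg, lnb_lnb, Nat.add_sub_cancel' ht,
      Nat.choose_succ_succ' (t + r) r, pow_succ]
    push_cast
    module
  · simp only [ne_eq, Prod.mk.injEq]; omega
  · rintro ⟨i, j⟩ hij hne
    rw [HasAntidiagonal.mem_antidiagonal] at hij
    simp only [ne_eq, Prod.mk.injEq] at hne
    rw [lnb_lnb]
    rcases Nat.lt_or_ge i r with hir | hir
    · rw [hchain (N - r + i) (by omega), lnb_zero_left, smul_zero, smul_zero]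
    · rw [show N - r + i = N + (i - r) by omega, ← lnb_lnb, hA (i - r) (by omega) (by omega),
        lnb_zero_left, smul_zero, smul_zero]
  · exact fun h ↦ absurd (HasAntidiagonal.mem_antidiagonal.2 (by simp only; omega)) h
  · exact fun h ↦ absurd (HasAntidiagonal.mem_antidiagonal.2 (by simp only; omega)) h

lemma succ_zsmul_lie_lnb_lie (hchain : ∀ n < N, ⁅lnb y x n, y⁆ = 0)
    (hA1 : ⁅lnb (lnb y x N) x 1, y⁆ = -lnb ⁅lnb y x N, y⁆ x 1)
    (hA : ∀ s, 2 ≤ s → s ≤ t → ⁅lnb (lnb y x N) x s, y⁆ = 0)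
    (hT : ∀ i < t, ⁅lnb ⁅lnb y x N, y⁆ x i, y⁆ = 0) (ht : 1 ≤ t) (htN : t < N) :
    ((t : ℤ) + 1) • ⁅lnb ⁅lnb y x N, y⁆ x t, y⁆ = (-1 : ℤ) ^ t • ⁅lnb ⁅lnb y x N, y⁆ x t, y⁆ := by
  have h := congrArg (⁅·, y⁆) (lie_lnb_sub_lnb_add hchain hA1 hA ht (Nat.zero_le N))
  simp only [Nat.sub_zero, add_zero, pow_zero, zero_add, Nat.choose_one_right, one_mul,
    zsmul_lie] at h
  rw [lie_lie, hchain t htN, lie_zero, zero_sub, lie_skew, lie_lnb_eq_neg_one_pow_zsmul hT] at h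
  exact_mod_cast h.symm

lemma choose_zsmul_lie_lnb_lie_eq_self (hchain : ∀ n < N, ⁅lnb y x n, y⁆ = 0)
    (hA1 : ⁅lnb (lnb y x N) x 1, y⁆ = -lnb ⁅lnb y x N, y⁆ x 1)
    (hA : ∀ s, 2 ≤ s → s ≤ t → ⁅lnb (lnb y x N) x s, y⁆ = 0)
    (hT : ∀ i < t, ⁅lnb ⁅lnb y x N, y⁆ x i, y⁆ = 0) (ht : 1 ≤ t) (htN : t < N) (hN : Odd N) :
    ((N + 1).choose t : ℤ) • ⁅lnb ⁅lnb y x N, y⁆ x t, y⁆ = ⁅lnb ⁅lnb y x N, y⁆ x t, y⁆ := by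
  have h := congrArg (⁅·, y⁆) (lie_lnb_sub_lnb_add hchain hA1 hA ht (Nat.sub_le N t))
  simp only [zsmul_lie] at h
  rw [Nat.sub_sub_self htN.le, Nat.add_sub_cancel' htN.le, lie_lie, hchain t htN, lie_zero,
    sub_zero, ← lie_skew, lie_lnb_eq_neg_one_pow_zsmul hT,
    Nat.choose_symm_of_eq_add (show N + 1 = N - t + 1 + t by omega)] at h
  have hsign : (-1 : ℤ) ^ (N - t) = -(-1) ^ t := by
    have h1 : (-1 : ℤ) ^ (N - t) * (-1) ^ t = -1 := by
      rw [← pow_add, Nat.sub_add_cancel htN.le, hN.neg_one_pow]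
    rcases neg_one_pow_eq_or ℤ t with h' | h' <;> rw [h'] at h1 ⊢ <;> linarith
  rcases neg_one_pow_eq_or ℤ t with h' | h' <;> simpa [h', hsign, -lie_skew] using h.symm

lemma choose_zsmul_lie_lnb_lie_eq_zero (hchain : ∀ n < N, ⁅lnb y x n, y⁆ = 0)
    (hA1 : ⁅lnb (lnb y x N) x 1, y⁆ = -lnb ⁅lnb y x N, y⁆ x 1)
    (hA : ∀ s, 2 ≤ s → s ≤ t → ⁅lnb (lnb y x N) x s, y⁆ = 0) (ht : 1 ≤ t) {r : ℕ}
    (hr : 1 ≤ r) (htr : t + r < N) :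
    ((t + r + 1).choose (r + 1) : ℤ) • ⁅lnb ⁅lnb y x N, y⁆ x t, y⁆ = 0 := by
  have h := congrArg (⁅·, y⁆) (lie_lnb_sub_lnb_add hchain hA1 hA ht (r := r) (by omega))
  simp only [zsmul_lie] at h
  rw [lie_lie, hchain (t + r) htr, hchain (N - r) (by omega), lie_zero, lie_zero, sub_zero] at h
  rcases neg_one_pow_eq_or ℤ r with h' | h' <;> simpa [h'] using h.symm

end Chain

lemma Int.cast_eq_of_zsmul_eq {F V : Type*} [Field F] [AddCommGroup V] [Module F V] {v : V}
    (hv : v ≠ 0) {a b : ℤ} (h : a • v = b • v) : (a : F) = b :=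
  smul_left_injective F hv (by simpa only [Int.cast_smul_eq_zsmul] using h)

lemma lie_lnb_one_lie_eq_neg {F L : Type*} [Field F] [LieRing L] [LieAlgebra F L] {x y : L}
    {N : ℕ} (hchain : ∀ n < N, ⁅lnb y x n, y⁆ = 0) (hN : Odd N) (h2 : (2 : F) ≠ 0)
    (hN2 : ((N + 1 : ℕ) : F) = -2) :
    ⁅lnb (lnb y x N) x 1, y⁆ = -lnb ⁅lnb y x N, y⁆ x 1 := by
  have h := two_nsmul_lie_lnb_one hchain hN
  rw [← Nat.cast_smul_eq_nsmul F, ← Nat.cast_smul_eq_nsmul F, hN2, Nat.cast_two, neg_smul,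
    ← smul_neg] at h
  exact smul_right_injective L h2 h

lemma lnb_lie_lnb_eq_zero {F L : Type*} [Field F] [LieRing L] [LieAlgebra F L] {x y : L}
    {N : ℕ} (hchain : ∀ n < N, ⁅lnb y x n, y⁆ = 0)
    (hA1 : ⁅lnb (lnb y x N) x 1, y⁆ = -lnb ⁅lnb y x N, y⁆ x 1)
    (hA : ∀ s, 2 ≤ s → s ≤ N → ⁅lnb (lnb y x N) x s, y⁆ = 0) (hN : 1 ≤ N)
    (hN1 : (N : F) + 1 ≠ 0) : lnb ⁅lnb y x N, y⁆ x N = 0 := by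
  have h := lie_lnb_sub_lnb_add hchain hA1 hA hN (Nat.zero_le N)
  simp only [Nat.sub_zero, add_zero, zero_add, lie_self, pow_zero, Nat.choose_one_right,
    one_mul] at h
  rw [← Int.cast_smul_eq_zsmul F] at h
  exact (smul_eq_zero.1 h.symm).resolve_left (by exact_mod_cast hN1)

lemma Nat.Prime.three_le_pow {p m : ℕ} (hp : p.Prime) (hp2 : p ≠ 2) (hq : 1 < p ^ m) :
    3 ≤ p ^ m := by
  have hm : m ≠ 0 := by rintro rfl; simp at hq
  have := Nat.le_self_pow hm p
  have := hp.two_le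
  omega

section PrimePowerChoose

variable {R : Type*} [CommRing R] {p : ℕ} [CharP R p]

lemma cast_prime_pow_eq_zero {m : ℕ} (hm : m ≠ 0) : ((p ^ m : ℕ) : R) = 0 :=
  (CharP.cast_eq_zero_iff R p _).2 (dvd_pow_self p hm)

lemma cast_two_mul_prime_pow_sub_two {m : ℕ} (hq : 1 < p ^ m) :
    ((2 * p ^ m - 2 : ℕ) : R) = -2 := by
  have hm : m ≠ 0 := by rintro rfl; simp at hq
  rw [Nat.cast_sub (by omega), Nat.cast_mul, cast_prime_pow_eq_zero hm]
  norm_num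

lemma cast_choose_prime_pow_eq_zero (hp : p.Prime) {m i : ℕ} (hi0 : i ≠ 0) (hi : i < p ^ m) :
    ((p ^ m).choose i : R) = 0 :=
  (CharP.cast_eq_zero_iff R p _).2 (hp.dvd_choose_pow hi0 hi.ne)

lemma cast_choose_prime_pow_add (hp : p.Prime) {m a i : ℕ} (hi : i < p ^ m) :
    ((p ^ m + a).choose i : R) = a.choose i := by
  rw [Nat.add_choose_eq, Nat.cast_sum, sum_eq_single (0, i)]
  · simp
  · rintro ⟨j, k⟩ hjk hne
    rw [HasAntidiagonal.mem_antidiagonal] at hjk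
    have hj : j ≠ 0 := by rintro rfl; exact hne (by simp_all)
    rw [Nat.cast_mul, cast_choose_prime_pow_eq_zero hp hj (by omega), zero_mul]
  · exact fun h ↦ absurd (HasAntidiagonal.mem_antidiagonal.2 (by simp)) h

lemma cast_choose_prime_pow_sub_one (hp : p.Prime) {m i : ℕ} (hi : i < p ^ m) :
    ((p ^ m - 1).choose i : R) = (-1) ^ i := by
  induction i with
  | zero => simp
  | succ i ih =>
    have hpascal := Nat.choose_succ_succ' (p ^ m - 1) i
    rw [Nat.sub_add_cancel (by omega)] at hpascal
    have h0 := cast_choose_prime_pow_eq_zero (R := R) hp (Nat.succ_ne_zero i) hi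
    rw [hpascal, Nat.cast_add, ih (by omega)] at h0
    linear_combination h0

lemma cast_choose_prime_pow_sub_two (hp : p.Prime) {m i : ℕ} (hi : i < p ^ m) :
    ((p ^ m - 2).choose i : R) = (-1) ^ i * (i + 1) := by
  induction i with
  | zero => simp
  | succ i ih =>
    have hpascal := Nat.choose_succ_succ' (p ^ m - 2) i
    rw [show p ^ m - 2 + 1 = p ^ m - 1 by omega] at hpascal
    have h1 := cast_choose_prime_pow_sub_one (R := R) hp hi
    rw [hpascal, Nat.cast_add, ih (by omega)] at h1
    push_cast
    linear_combination h1

lemma eq_prime_pow_sub_two_of_cast_choose (hp : p.Prime) (hp2 : p ≠ 2) {m t : ℕ}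
    (hq : 1 < p ^ m) (htN : t < 2 * p ^ m - 3) (h1 : (t : R) + 1 = (-1) ^ t)
    (h2 : ((2 * p ^ m - 2).choose t : R) = 1)
    (h3 : ∀ r, 1 ≤ r → t + r < 2 * p ^ m - 3 → ((t + r + 1).choose (r + 1) : R) = 0) :
    t = p ^ m - 2 := by
  have : Nontrivial R := CharP.nontrivial_of_char_ne_one hp.one_lt.ne'
  rcases lt_trichotomy t (p ^ m - 2) with hlt | heq | hgt
  · have h := h3 (p ^ m - 1) (by omega) (by omega)
    rw [show t + (p ^ m - 1) + 1 = p ^ m + t by omega, Nat.sub_add_cancel hq.le,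
      Nat.choose_symm_add, cast_choose_prime_pow_add hp (by omega), Nat.choose_self,
      Nat.cast_one] at h
    exact absurd h one_ne_zero
  · exact heq
  · set c := 2 * p ^ m - 2 - t with hc
    have hcq : c < p ^ m := by omega
    rw [Nat.choose_symm_of_eq_add (show 2 * p ^ m - 2 = t + c by omega),
      show 2 * p ^ m - 2 = p ^ m + (p ^ m - 2) by omega, cast_choose_prime_pow_add hp hcq,
      cast_choose_prime_pow_sub_two hp hcq] at h2
    have hcast : (t : R) = -2 - c := by
      rw [eq_sub_iff_add_eq, ← Nat.cast_add, show t + c = 2 * p ^ m - 2 by omega,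
        cast_two_mul_prime_pow_sub_two hq]
    have hpar : (-1 : R) ^ t = (-1) ^ c := by
      rw [neg_one_pow_eq_pow_mod_two, show t % 2 = c % 2 by omega, ← neg_one_pow_eq_pow_mod_two]
    rw [hcast, hpar] at h1
    have hsq : (-1 : R) ^ c * (-1) ^ c = 1 := by rw [← mul_pow]; simp
    have h2R : (2 : R) ≠ 0 := Ring.two_ne_zero (by rwa [ringChar.eq R p])
    exact absurd (by linear_combination -h2 - hsq - (-1 : R) ^ c * h1) h2R

end PrimePowerChoose

lemma eq_prime_pow_sub_two_of_lie_lnb_lie_ne_zero (F : Type*) {L : Type*} [Field F] [LieRing L]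
    [LieAlgebra F L] {p : ℕ} [CharP F p] (hp : p.Prime) (hp2 : p ≠ 2) {m t : ℕ} (hq : 1 < p ^ m)
    {x y : L} (hchain : ∀ n < 2 * p ^ m - 3, ⁅lnb y x n, y⁆ = 0)
    (hA : ∀ s, 2 ≤ s → s ≤ t → ⁅lnb (lnb y x (2 * p ^ m - 3)) x s, y⁆ = 0)
    (hT : ∀ i < t, ⁅lnb ⁅lnb y x (2 * p ^ m - 3), y⁆ x i, y⁆ = 0)
    (hTt : ⁅lnb ⁅lnb y x (2 * p ^ m - 3), y⁆ x t, y⁆ ≠ 0)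
    (hW : ∀ s ≤ t, lnb ⁅lnb y x (2 * p ^ m - 3), y⁆ x s ≠ 0) (ht : 1 ≤ t) : t = p ^ m - 2 := by
  have hq3 := hp.three_le_pow hp2 hq
  have hN : Odd (2 * p ^ m - 3) := ⟨p ^ m - 2, by omega⟩
  have h2 : (2 : F) ≠ 0 := Ring.two_ne_zero (by rwa [ringChar.eq F p])
  have hN2 : ((2 * p ^ m - 3 + 1 : ℕ) : F) = -2 := by
    rw [show 2 * p ^ m - 3 + 1 = 2 * p ^ m - 2 by omega, cast_two_mul_prime_pow_sub_two hq]
  have hA1 := lie_lnb_one_lie_eq_neg hchain hN h2 hN2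
  have htN : t < 2 * p ^ m - 3 := by
    by_contra! hNt
    refine hW _ hNt (lnb_lie_lnb_eq_zero (F := F) hchain hA1 (fun s hs hsN ↦ hA s hs (by omega))
      (by omega) ?_)
    rw [← Nat.cast_add_one, hN2]
    exact neg_ne_zero.2 h2
  refine eq_prime_pow_sub_two_of_cast_choose (R := F) hp hp2 hq htN ?_ ?_ fun r hr htr ↦ ?_
  · exact_mod_cast Int.cast_eq_of_zsmul_eq hTt (succ_zsmul_lie_lnb_lie hchain hA1 hA hT ht htN)
  · rw [show 2 * p ^ m - 2 = 2 * p ^ m - 3 + 1 by omega]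
    exact_mod_cast Int.cast_eq_of_zsmul_eq hTt
      ((choose_zsmul_lie_lnb_lie_eq_self hchain hA1 hA hT ht htN hN).trans (one_smul ℤ _).symm)
  · exact_mod_cast Int.cast_eq_of_zsmul_eq hTt
      ((choose_zsmul_lie_lnb_lie_eq_zero hchain hA1 hA ht hr htr).trans (zero_smul ℤ _).symm)

namespace IsThinGrading

variable {F : Type*} [Field F] {L : Type*} [LieRing L] [LieAlgebra F L]
  {Lc : ℕ → Submodule F L} {x y z : L} {i : ℕ}

lemma lnb_mem (hL : IsThinGrading F L Lc) (hx : x ∈ Lc 1) (hz : z ∈ Lc i) (n : ℕ) :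
    lnb z x n ∈ Lc (i + n) := by
  induction n with
  | zero => exact hz
  | succ n ih => exact hL.bracket_mem _ 1 _ ih x hx

lemma span_pair_eq (hL : IsThinGrading F L Lc) (hx : x ∈ Lc 1) (hy : y ∈ Lc 1)
    (hxy : LinearIndependent F ![x, y]) : Submodule.span F {x, y} = Lc 1 := by
  have hrange : Set.range ![x, y] = {x, y} := Matrix.range_cons_cons_empty x y ![]
  have : FiniteDimensional F (Lc 1) := Module.finite_of_finrank_eq_succ hL.dim_one
  refine Submodule.eq_of_le_of_finrank_le ?_ ?_
  · rw [Submodule.span_le]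
    exact Set.insert_subset hx (Set.singleton_subset_iff.2 hy)
  · rw [hL.dim_one, ← hrange, finrank_span_eq_card hxy, Fintype.card_fin]

lemma eq_span_lie_pair (hL : IsThinGrading F L Lc) (hx : x ∈ Lc 1) (hy : y ∈ Lc 1)
    (hxy : LinearIndependent F ![x, y]) (hi : 1 ≤ i) (hz : z ∈ Lc i) (hz0 : z ≠ 0) :
    Lc (i + 1) = Submodule.span F {⁅z, x⁆, ⁅z, y⁆} := by
  have hset : {w | ∃ u ∈ Lc 1, w = ⁅z, u⁆} = LieAlgebra.ad F L z '' (Lc 1 : Set L) := by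
    ext w; simp [eq_comm]
  rw [← hL.covering i hi z hz hz0, hset, Submodule.span_image, Submodule.span_eq,
    ← hL.span_pair_eq hx hy hxy, Submodule.map_span, Set.image_pair]
  rfl

lemma eq_span_lie_of_lie_eq_zero (hL : IsThinGrading F L Lc) (hx : x ∈ Lc 1) (hy : y ∈ Lc 1)
    (hxy : LinearIndependent F ![x, y]) (hi : 1 ≤ i) (hz : z ∈ Lc i) (hz0 : z ≠ 0)
    (hzy : ⁅z, y⁆ = 0) : Lc (i + 1) = Submodule.span F {⁅z, x⁆} := by
  rw [hL.eq_span_lie_pair hx hy hxy hi hz hz0, hzy, Set.pair_comm, Submodule.span_insert_zero]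

lemma lie_ne_zero_of_lie_eq_zero (hL : IsThinGrading F L Lc) (hx : x ∈ Lc 1) (hy : y ∈ Lc 1)
    (hxy : LinearIndependent F ![x, y]) (hi : 1 ≤ i) (hz : z ∈ Lc i) (hz0 : z ≠ 0)
    (hzy : ⁅z, y⁆ = 0) : ⁅z, x⁆ ≠ 0 := by
  intro hzx
  apply hL.nonzero (i + 1) (by omega)
  rw [hL.eq_span_lie_of_lie_eq_zero hx hy hxy hi hz hz0 hzy, hzx, Submodule.span_zero_singleton]

lemma lie_ne_zero_of_finrank_eq_two (hL : IsThinGrading F L Lc) (hx : x ∈ Lc 1)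
    (hy : y ∈ Lc 1) (hxy : LinearIndependent F ![x, y]) (hi : 1 ≤ i) (hz : z ∈ Lc i)
    (hz0 : z ≠ 0) (hdim : Module.finrank F (Lc (i + 1)) = 2) : ⁅z, y⁆ ≠ 0 := by
  intro hzy
  rw [hL.eq_span_lie_of_lie_eq_zero hx hy hxy hi hz hz0 hzy,
    finrank_span_singleton (hL.lie_ne_zero_of_lie_eq_zero hx hy hxy hi hz hz0 hzy)] at hdim
  exact absurd hdim (by norm_num)

lemma lnb_ne_zero (hL : IsThinGrading F L Lc) (hx : x ∈ Lc 1) (hy : y ∈ Lc 1)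
    (hxy : LinearIndependent F ![x, y]) (hi : 1 ≤ i) (hz : z ∈ Lc i) (hz0 : z ≠ 0) {n : ℕ}
    (hT : ∀ s < n, ⁅lnb z x s, y⁆ = 0) : lnb z x n ≠ 0 := by
  induction n with
  | zero => exact hz0
  | succ n ih =>
    exact hL.lie_ne_zero_of_lie_eq_zero hx hy hxy (by omega) (hL.lnb_mem hx hz n)
      (ih fun s hs ↦ hT s (by omega)) (hT n (by omega))

lemma lie_eq_zero_of_mem (hL : IsThinGrading F L Lc) (hx : x ∈ Lc 1) (hy : y ∈ Lc 1)
    (hxy : LinearIndependent F ![x, y]) (hi : 1 ≤ i) (hz : z ∈ Lc i) (hz0 : z ≠ 0) {n : ℕ}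
    (hn : 1 ≤ n) (hT : ∀ s ≤ n, ⁅lnb z x s, y⁆ = 0) {u : L} (hu : u ∈ Lc (i + n)) :
    ⁅u, y⁆ = 0 := by
  obtain ⟨n, rfl⟩ := Nat.exists_eq_add_of_le' hn
  rw [← add_assoc, hL.eq_span_lie_of_lie_eq_zero hx hy hxy (by omega) (hL.lnb_mem hx hz n)
    (hL.lnb_ne_zero hx hy hxy hi hz hz0 fun s hs ↦ hT s (by omega)) (hT n (by omega))] at hu
  obtain ⟨c, rfl⟩ := Submodule.mem_span_singleton.1 hu
  rw [smul_lie, ← lnb_succ, hT (n + 1) le_rfl, smul_zero]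

lemma lie_lnb_ne_zero (hL : IsThinGrading F L Lc) (hx : x ∈ Lc 1) (hy : y ∈ Lc 1)
    (hxy : LinearIndependent F ![x, y]) {N : ℕ} (hchain : ∀ n < N, ⁅lnb y x n, y⁆ = 0)
    (hdim : Module.finrank F (Lc (N + 2)) = 2) : ⁅lnb y x N, y⁆ ≠ 0 :=
  hL.lie_ne_zero_of_finrank_eq_two hx hy hxy (by omega) (hL.lnb_mem hx hy N)
    (hL.lnb_ne_zero hx hy hxy le_rfl hy (hxy.ne_zero 1) hchain)
    (by rwa [show 1 + N + 1 = N + 2 by omega])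

end IsThinGrading

lemma eq_zero_of_lt_of_isLeast {M : Type*} [Zero M] {f : ℕ → M} (h0 : f 0 = 0) {h : ℕ}
    (hh : IsLeast {h : ℕ | 1 < h ∧ f (h - 1) ≠ 0} h) {i : ℕ} (hi : i < h - 1) : f i = 0 := by
  rcases i.eq_zero_or_pos with rfl | hi0
  · exact h0
  · by_contra hne
    have := hh.2 ⟨(by omega : 1 < i + 1), by simpa using hne⟩
    omega

theorem h_eq_q_sub_one_general {F : Type*} [Field F] {L : Type*} [LieRing L] [LieAlgebra F L]
    (p : ℕ) (hp : p.Prime) (hp2 : p ≠ 2) (hchar : CharP F p)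
    (Lc : ℕ → Submodule F L) (hL : IsThinGrading F L Lc)
    (k q : ℕ) (hq : ∃ m : ℕ, q = p ^ m) (hq1 : 1 < q) (hkq : k = 2 * q - 1)
    (hk : IsSecondDiamond Lc k)
    (x y : L) (hsetup : ThinSetup Lc x y k)
    (v : L) (hv : v = lnb y x (k - 2))
    (h : ℕ) (hh : IsLeast {h : ℕ | 1 < h ∧ ⁅lnb ⁅v, y⁆ x (h - 1), y⁆ ≠ 0} h) :
    h = q - 1 := by
  obtain ⟨m, rfl⟩ := hq
  obtain ⟨-, hy, hx, hxy, -, hchain⟩ := hsetup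
  subst hkq hv
  have hq3 := hp.three_le_pow hp2 hq1
  set N := 2 * p ^ m - 3
  rw [show 2 * p ^ m - 1 - 2 = N by omega] at hh
  replace hchain : ∀ n < N, ⁅lnb y x n, y⁆ = 0 := fun n hn ↦ hchain n (by omega)
  have hvmem : lnb y x N ∈ Lc (1 + N) := hL.lnb_mem hx hy N
  have hwmem : ⁅lnb y x N, y⁆ ∈ Lc (1 + N + 1) := hL.bracket_mem _ 1 _ hvmem y hy
  have hw0 : ⁅lnb y x N, y⁆ ≠ 0 := hL.lie_lnb_ne_zero hx hy hxy hchain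
    (by rw [show N + 2 = 2 * p ^ m - 1 by omega]; exact hk.1.2)
  have hT : ∀ i < h - 1, ⁅lnb ⁅lnb y x N, y⁆ x i, y⁆ = 0 := fun i hi ↦
    eq_zero_of_lt_of_isLeast (f := fun i ↦ ⁅lnb ⁅lnb y x N, y⁆ x i, y⁆)
      (lie_lie_lnb_eq_zero hchain (by omega)) hh hi
  have hA : ∀ s, 2 ≤ s → s ≤ h - 1 → ⁅lnb (lnb y x N) x s, y⁆ = 0 := fun s hs hst ↦
    hL.lie_eq_zero_of_mem hx hy hxy (by omega) hwmem hw0 (n := s - 1) (by omega)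
      (fun j hj ↦ hT j (by omega)) (by convert hL.lnb_mem hx hvmem s using 2; omega)
  have := eq_prime_pow_sub_two_of_lie_lnb_lie_ne_zero F hp hp2 hq1 hchain hA hT hh.1.2
    (fun s hs ↦ hL.lnb_ne_zero hx hy hxy (by omega) hwmem hw0 fun i hi ↦ hT i (by omega))
    (by have := hh.1.1; omega)
  omega

/-- If `p` is odd and the second diamond occurs in degree `k = 2q − 1`, `q > 1` a power
of `p`, then the smallest `h > 1` with `[v y x^{h−1} y] ≠ 0` is `h = q − 1`. -/
theorem h_eq_q_sub_one {F : Type*} [Field F] {L : Type*} [LieRing L] [LieAlgebra F L]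
    (p : ℕ) (hp : p.Prime) (hp2 : p ≠ 2) (hchar : CharP F p)
    (Lc : ℕ → Submodule F L) (hL : IsThinGrading F L Lc)
    (k q : ℕ) (hq : ∃ m : ℕ, q = p ^ m) (hq1 : 1 < q) (hkq : k = 2 * q - 1)
    (hk : IsSecondDiamond Lc k)
    (x y : L) (hsetup : ThinSetup Lc x y k)
    (v : L) (hv : v = lnb y x (k - 2))
    (hmet : QuotientMetabelian Lc k)
    (h : ℕ) (hh : IsLeast {h : ℕ | 1 < h ∧ ⁅lnb ⁅v, y⁆ x (h - 1), y⁆ ≠ 0} h) :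
    h = q - 1 :=
  h_eq_q_sub_one_general p hp hp2 hchar Lc hL k q hq hq1 hkq hk x y hsetup v hv h hh
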